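/- Let G be a 2-connected graph and (A,B) a Whitney separation of G with A ∩ B = {u,v}. Then the graph G′ obtained from G by the Whitney switch with respect to (A,B) is 2-connected. -/

import Mathlib

open SimpleGraph

/-- A graph is 2-connected: connected, at least 3 vertices, no cut vertex. -/
def TwoConnected {V : Type*} [Fintype V] (G : SimpleGraph V) : Prop :=
  G.Connected ∧ 3 ≤ Fintype.card V ∧ ∀ v : V, (G.induce ({v}ᶜ : Set V)).Connected

/-- `(A,B)` is a Whitney separation of `G`: `A ∪ B = V(G)`, `A∖B ≠ ∅ ≠ B∖A`,
`|A ∩ B| = 2`, and no edge joins `A∖B` to `B∖A`. -/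
def WhitneySep {V : Type*} (G : SimpleGraph V) (A B : Set V) : Prop :=
  A ∪ B = Set.univ ∧ (A \ B).Nonempty ∧ (B \ A).Nonempty ∧
    (∃ u v : V, u ≠ v ∧ A ∩ B = {u, v}) ∧
    ∀ x ∈ A \ B, ∀ y ∈ B \ A, ¬G.Adj x y

open Classical in
/-- The Whitney switch with respect to a Whitney separation with side `B` and
separator `{u,v}`: for every `w ∈ B ∖ {u,v}`, each edge `uw` is replaced by `vw`
and each edge `vw` by `uw`; all other edges are unchanged. -/
noncomputable def wswitch {V : Type*} (G : SimpleGraph V) (B : Set V) (u v : V) :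
    SimpleGraph V where
  Adj x y :=
    if x ∈ B \ {u, v} ∨ y ∈ B \ {u, v} then
      G.Adj (Equiv.swap u v x) (Equiv.swap u v y)
    else G.Adj x y
  symm := by
    constructor
    intro x y hxy
    by_cases hc : x ∈ B \ {u, v} ∨ y ∈ B \ {u, v}
    · rw [if_pos hc] at hxy
      rw [if_pos hc.symm]
      exact hxy.symm
    · rw [if_neg hc] at hxy
      rw [if_neg fun hcc => hc hcc.symm]
      exact hxy.symm
  loopless := by
    constructor
    intro x hx
    by_cases hc : x ∈ B \ {u, v} ∨ x ∈ B \ {u, v}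
    · rw [if_pos hc] at hx
      exact G.loopless.irrefl _ hx
    · rw [if_neg hc] at hx
      exact G.loopless.irrefl _ hx

/-! On `A` the switched graph agrees with `G`, and on `B` it is the image of `G[B]` under the
transposition of `u` and `v`. After deleting a vertex `w`, every remaining vertex of a side still
reaches `{u, v} \ {w}` inside that side, by following a path of `G - w` until it leaves the side.
Inside each side, `u` and `v` are joined through a vertex of that side off the separator, using
that `G - u` and `G - v` are connected; as `w ∉ {u, v}` misses one side, `u` and `v` stay joined
in `G - w`. Both facts live in one side at a time, so they survive the switch. -/

section

variable {V W : Type*}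

def ReachableIn (G : SimpleGraph V) (S : Set V) (a b : V) : Prop :=
  ∃ p : G.Walk a b, ∀ z ∈ p.support, z ∈ S

namespace ReachableIn

variable {G : SimpleGraph V} {S T : Set V} {a b c : V}

lemma refl (ha : a ∈ S) : ReachableIn G S a a := ⟨.nil, by simpa using ha⟩

lemma right_mem (h : ReachableIn G S a b) : b ∈ S :=
  let ⟨p, hp⟩ := h; hp b p.end_mem_support

lemma symm (h : ReachableIn G S a b) : ReachableIn G S b a :=
  let ⟨p, hp⟩ := h; ⟨p.reverse, fun z hz => hp z (by simpa using hz)⟩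

lemma trans (h₁ : ReachableIn G S a b) (h₂ : ReachableIn G S b c) : ReachableIn G S a c := by
  obtain ⟨p, hp⟩ := h₁
  obtain ⟨q, hq⟩ := h₂
  refine ⟨p.append q, fun z hz => ?_⟩
  rcases (Walk.mem_support_append_iff p q).mp hz with hz | hz
  exacts [hp z hz, hq z hz]

lemma mono (hST : S ⊆ T) (h : ReachableIn G S a b) : ReachableIn G T a b :=
  let ⟨p, hp⟩ := h; ⟨p, fun z hz => hST (hp z hz)⟩

lemma cons (hab : G.Adj a b) (ha : a ∈ S) (h : ReachableIn G S b c) : ReachableIn G S a c :=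
  let ⟨p, hp⟩ := h; ⟨.cons hab p, by simpa [ha] using hp⟩

lemma map {H : SimpleGraph W} (f : V → W)
    (hf : ∀ x ∈ S, ∀ y ∈ S, G.Adj x y → H.Adj (f x) (f y)) (h : ReachableIn G S a b) :
    ReachableIn H (f '' S) (f a) (f b) := by
  obtain ⟨p, hp⟩ := h
  induction p with
  | nil => exact refl (Set.mem_image_of_mem f (hp _ (by simp)))
  | @cons x y z hxy q ih =>
    have hx : x ∈ S := hp x (by simp)
    have hy : y ∈ S := hp y (by simp)
    exact cons (hf x hx y hy hxy) (Set.mem_image_of_mem f hx)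
      (ih fun z hz => hp z (by simp [hz]))

lemma of_adj {H : SimpleGraph V} (hf : ∀ x ∈ S, ∀ y ∈ S, G.Adj x y → H.Adj x y)
    (h : ReachableIn G S a b) : ReachableIn H S a b := by
  simpa using h.map id hf

lemma of_connected_induce (hS : (G.induce S).Connected) (ha : a ∈ S) (hb : b ∈ S) :
    ReachableIn G S a b := by
  obtain ⟨p⟩ := hS.preconnected ⟨a, ha⟩ ⟨b, hb⟩
  refine ⟨p.map (Embedding.induce S).toHom, fun z hz => ?_⟩
  obtain ⟨z', -, rfl⟩ := List.mem_map.mp (p.support_map _ ▸ hz)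
  exact z'.2

lemma reachable_induce (h : ReachableIn G S a b) :
    (G.induce S).Reachable ⟨a, h.symm.right_mem⟩ ⟨b, h.right_mem⟩ :=
  let ⟨p, hp⟩ := h; ⟨p.induce S hp⟩

end ReachableIn

def IsSeparation (G : SimpleGraph V) (A B : Set V) : Prop :=
  A ∪ B = Set.univ ∧ ∀ x ∈ A \ B, ∀ y ∈ B \ A, ¬G.Adj x y

namespace IsSeparation

variable {G : SimpleGraph V} {A B S : Set V} {u v : V}

lemma symm (hs : IsSeparation G A B) : IsSeparation G B A :=
  ⟨Set.union_comm A B ▸ hs.1, fun x hx y hy hxy => hs.2 y hy x hx hxy.symm⟩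

lemma mem_right_of_notMem_left (hs : IsSeparation G A B) {x : V} (hx : x ∉ A) : x ∈ B :=
  ((hs.1 ▸ Set.mem_univ x : x ∈ A ∪ B)).resolve_left hx

lemma exists_reachableIn_inter (hs : IsSeparation G A B) {x y : V}
    (h : ReachableIn G S x y) (hx : x ∈ A) (hy : y ∈ B) :
    ∃ c ∈ A ∩ B, ReachableIn G (A ∩ S) x c := by
  obtain ⟨p, hp⟩ := h
  induction p with
  | nil => exact ⟨_, ⟨hx, hy⟩, .refl ⟨hx, hp _ (by simp)⟩⟩
  | @cons x x' y hxx' q ih =>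
    have hxS : x ∈ S := hp x (by simp)
    by_cases hx' : x' ∈ A
    · obtain ⟨c, hc, hr⟩ := ih hx' hy (fun z hz => hp z (by simp [hz]))
      exact ⟨c, hc, .cons hxx' ⟨hx, hxS⟩ hr⟩
    · have hxB : x ∈ B := by
        by_contra hxB
        exact hs.2 x ⟨hx, hxB⟩ x' ⟨hs.mem_right_of_notMem_left hx', hx'⟩ hxx'
      exact ⟨x, ⟨hx, hxB⟩, .refl ⟨hx, hxS⟩⟩

variable (huv : A ∩ B = {u, v}) (hne : u ≠ v) (hdel : ∀ z, (G.induce {z}ᶜ).Connected)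
include huv hne hdel

lemma exists_reachableIn_pair (hs : IsSeparation G A B) {w x : V} (hx : x ∈ A) (hxw : x ≠ w) :
    ∃ c ∈ ({u, v} : Set V), ReachableIn G (A ∩ {w}ᶜ) x c := by
  obtain ⟨t, htuv, htw⟩ : ∃ t ∈ ({u, v} : Set V), t ≠ w := by
    by_cases huw : u = w
    · exact ⟨v, by simp, huw ▸ hne.symm⟩
    · exact ⟨u, by simp, huw⟩
  have htB : t ∈ B := (huv ▸ htuv : t ∈ A ∩ B).2
  have hr : ReachableIn G {w}ᶜ x t := .of_connected_induce (hdel w) hxw htw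
  simpa only [huv] using hs.exists_reachableIn_inter hr hx htB

lemma reachableIn_of_inter_eq_pair (hs : IsSeparation G A B) (hAB : (A \ B).Nonempty) :
    ReachableIn G A u v := by
  obtain ⟨x, hxA, hxB⟩ := hAB
  have hxuv : x ∉ ({u, v} : Set V) := fun h => hxB (huv ▸ h : x ∈ A ∩ B).2
  have hreach : ∀ {c d : V}, c ∈ ({u, v} : Set V) → d ∈ ({u, v} : Set V) → c ≠ d →
      ReachableIn G A x c := by
    intro c d hc hd hcd
    obtain ⟨e, he, hr⟩ := hs.exists_reachableIn_pair huv hne hdel (w := d) hxA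
      (fun h => hxuv (h ▸ hd))
    have hed : e ≠ d := hr.right_mem.2
    have hec : e = c := by
      simp only [Set.mem_insert_iff, Set.mem_singleton_iff] at hc hd he
      grind
    exact hec ▸ hr.mono Set.inter_subset_left
  exact (hreach (by simp) (by simp) hne).symm.trans (hreach (by simp) (by simp) hne.symm)

end IsSeparation

lemma connected_of_forall_connected_induce_compl [Fintype V] {H : SimpleGraph V}
    (hcard : 3 ≤ Fintype.card V) (h : ∀ w, (H.induce {w}ᶜ).Connected) : H.Connected := by
  classical
  have : Nonempty V := Fintype.card_pos_iff.mp (by omega)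
  refine ⟨fun x y => ?_⟩
  obtain ⟨w, -, hw⟩ := Finset.exists_mem_notMem_of_card_lt_card (s := {x, y}) (t := .univ)
    (Finset.card_le_two.trans_lt (by rw [Finset.card_univ]; omega))
  simp only [Finset.mem_insert, Finset.mem_singleton, not_or] at hw
  have hr := (h w).preconnected ⟨x, Ne.symm hw.1⟩ ⟨y, Ne.symm hw.2⟩
  exact hr.map (Embedding.induce _).toHom

lemma connected_induce_compl_of_reachableIn_pair {H : SimpleGraph V} {u v w : V} (hne : u ≠ v)
    (hreach : ∀ x, x ≠ w → ∃ c ∈ ({u, v} : Set V), ReachableIn H {w}ᶜ x c)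
    (hlink : u ≠ w → v ≠ w → ReachableIn H {w}ᶜ u v) :
    (H.induce {w}ᶜ).Connected := by
  have hpair : ∀ c ∈ ({u, v} : Set V), ∀ d ∈ ({u, v} : Set V), c ≠ w → d ≠ w →
      ReachableIn H {w}ᶜ c d := by
    rintro c (rfl | rfl) d (rfl | rfl) hc hd
    exacts [.refl hc, hlink hc hd, (hlink hd hc).symm, .refl hc]
  have : Nonempty ({w}ᶜ : Set V) := by
    by_cases huw : u = w
    exacts [⟨v, huw ▸ hne.symm⟩, ⟨u, huw⟩]
  refine ⟨fun x y => ?_⟩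
  obtain ⟨c, hc, hxc⟩ := hreach x x.2
  obtain ⟨d, hd, hyd⟩ := hreach y y.2
  exact (hxc.trans ((hpair c hc d hd hxc.right_mem hyd.right_mem).trans hyd.symm)).reachable_induce

section Switch

open Classical

variable {G : SimpleGraph V} {B S : Set V} {u v a b x y : V}

lemma wswitch_adj_of_notMem (hx : x ∉ B \ {u, v}) (hy : y ∉ B \ {u, v}) :
    (wswitch G B u v).Adj x y ↔ G.Adj x y := by
  show (if _ then _ else _) ↔ _
  rw [if_neg (not_or.mpr ⟨hx, hy⟩)]

lemma wswitch_adj_of_mem (hu : u ∈ B) (hv : v ∈ B) (hx : x ∈ B) (hy : y ∈ B) :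
    (wswitch G B u v).Adj x y ↔ G.Adj (Equiv.swap u v x) (Equiv.swap u v y) := by
  show (if _ then _ else _) ↔ _
  split_ifs with h
  · rfl
  · have hx' : x ∈ ({u, v} : Set V) := by_contra fun hx' => h (.inl ⟨hx, hx'⟩)
    have hy' : y ∈ ({u, v} : Set V) := by_contra fun hy' => h (.inr ⟨hy, hy'⟩)
    rcases hx' with rfl | rfl <;> rcases hy' with rfl | rfl <;> simp [G.adj_comm]

lemma mapsTo_swap (hu : u ∈ B) (hv : v ∈ B) : Set.MapsTo (Equiv.swap u v) B B := by
  intro x hx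
  rw [Equiv.swap_apply_def]
  split_ifs
  exacts [hv, hu, hx]

lemma ReachableIn.wswitch_of_disjoint (hS : Disjoint S (B \ {u, v})) (h : ReachableIn G S a b) :
    ReachableIn (wswitch G B u v) S a b :=
  h.of_adj fun _ hx _ hy hxy => (wswitch_adj_of_notMem (Set.disjoint_left.mp hS hx)
    (Set.disjoint_left.mp hS hy)).mpr hxy

lemma ReachableIn.wswitch_swap (hu : u ∈ B) (hv : v ∈ B) (hS : S ⊆ B) (h : ReachableIn G S a b) :
    ReachableIn (wswitch G B u v) (Equiv.swap u v '' S) (Equiv.swap u v a) (Equiv.swap u v b) :=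
  h.map _ fun _ hx _ hy hxy => (wswitch_adj_of_mem hu hv (mapsTo_swap hu hv (hS hx))
    (mapsTo_swap hu hv (hS hy))).mpr (by simpa using hxy)

end Switch

namespace IsSeparation

open Classical

variable {G : SimpleGraph V} {A B : Set V} {u v : V}
  (hs : IsSeparation G A B) (huv : A ∩ B = {u, v}) (hne : u ≠ v)
  (hdel : ∀ z, (G.induce {z}ᶜ).Connected)
include hs huv hne hdel

lemma wswitch_exists_reachableIn_pair {w x : V} (hxw : x ≠ w) :
    ∃ c ∈ ({u, v} : Set V), ReachableIn (wswitch G B u v) {w}ᶜ x c := by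
  have huB : u ∈ B := (huv.ge (by simp)).2
  have hvB : v ∈ B := (huv.ge (by simp)).2
  set σ := Equiv.swap u v
  have hσ : ∀ c ∈ ({u, v} : Set V), σ c ∈ ({u, v} : Set V) := by
    rintro c (rfl | rfl) <;> simp [σ]
  by_cases hxA : x ∈ A
  · obtain ⟨c, hc, hr⟩ := hs.exists_reachableIn_pair huv hne hdel hxA hxw
    have hdisj : Disjoint (A ∩ {w}ᶜ) (B \ {u, v}) := by
      rw [← huv, Set.sdiff_inter_self_eq_sdiff]
      exact Set.disjoint_sdiff_right.mono_left Set.inter_subset_left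
    exact ⟨c, hc, (hr.wswitch_of_disjoint hdisj).mono Set.inter_subset_right⟩
  · -- in `B` the switched graph is the image of `G` under `σ`
    obtain ⟨c, hc, hr⟩ := hs.symm.exists_reachableIn_pair (Set.inter_comm A B ▸ huv) hne hdel
      (mapsTo_swap huB hvB (hs.mem_right_of_notMem_left hxA))
      (σ.injective.ne hxw)
    have hr' := hr.wswitch_swap huB hvB Set.inter_subset_left
    rw [Equiv.swap_apply_self] at hr'
    refine ⟨σ c, hσ c hc, hr'.mono ?_⟩
    rintro _ ⟨y, ⟨-, hy⟩, rfl⟩ rfl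
    exact hy (Equiv.swap_apply_self u v y).symm

lemma wswitch_reachableIn_compl (hAB : (A \ B).Nonempty) (hBA : (B \ A).Nonempty) {w : V}
    (huw : u ≠ w) (hvw : v ≠ w) : ReachableIn (wswitch G B u v) {w}ᶜ u v := by
  have hwuv : w ∉ ({u, v} : Set V) := by rintro (rfl | rfl) <;> contradiction
  by_cases hwA : w ∈ A
  · have hwB : w ∉ B := fun hwB => hwuv (huv ▸ ⟨hwA, hwB⟩)
    have huB : u ∈ B := (huv.ge (by simp)).2
    have hvB : v ∈ B := (huv.ge (by simp)).2
    have hr := (hs.symm.reachableIn_of_inter_eq_pair (Set.inter_comm A B ▸ huv) hne hdel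
      hBA).symm.wswitch_swap huB hvB subset_rfl
    simp only [Equiv.swap_apply_left, Equiv.swap_apply_right] at hr
    refine hr.mono ((mapsTo_swap huB hvB).image_subset.trans ?_)
    rintro _ hx rfl
    exact hwB hx
  · refine ((hs.reachableIn_of_inter_eq_pair huv hne hdel hAB).wswitch_of_disjoint ?_).mono ?_
    · rw [← huv, Set.sdiff_inter_self_eq_sdiff]
      exact Set.disjoint_sdiff_right
    · rintro _ hx rfl
      exact hwA hx

end IsSeparation

end

/-- The Whitney switch of a 2-connected graph with respect to a Whitney separation
is 2-connected. -/
theorem stmt13 {V : Type*} [Fintype V] (G : SimpleGraph V)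
    (A B : Set V) (u v : V)
    (hG : TwoConnected G) (hsep : WhitneySep G A B) (huv : A ∩ B = {u, v}) :
    TwoConnected (wswitch G B u v) := by
  obtain ⟨-, hcard, hdel⟩ := hG
  obtain ⟨hU, hAB, hBA, ⟨u', v', hne', huv'⟩, hE⟩ := hsep
  have hne : u ≠ v := by
    rw [huv, Set.pair_eq_pair_iff] at huv'
    rcases huv' with ⟨rfl, rfl⟩ | ⟨rfl, rfl⟩
    exacts [hne', hne'.symm]
  have hs : IsSeparation G A B := ⟨hU, hE⟩
  have hdel' : ∀ w, ((wswitch G B u v).induce {w}ᶜ).Connected := fun _ =>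
    connected_induce_compl_of_reachableIn_pair hne
      (fun _ hxw => hs.wswitch_exists_reachableIn_pair huv hne hdel hxw)
      (hs.wswitch_reachableIn_compl huv hne hdel hAB hBA)
  exact ⟨connected_of_forall_connected_induce_compl hcard hdel', hcard, hdel'⟩
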